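/- Let G be a weak compass structure over the finite linear order {0,…,m}: a labeling L of points (x,y) with x ≤ y by atoms. Suppose L(x,x) has Req(L(x,x)) = ∅ for all x, and L(x,y) = gen(L(x, y−1), L(x+1, y)) for all x < y. Then for all points (x′,y′) ⊏ (x,y) (i.e., x ≤ x′, y′ ≤ y, (x′,y′) ≠ (x,y)), it holds that Req(L(x′,y′)) ⊆ Req(L(x,y)) and Obs(L(x′,y′)) ⊆ Req(L(x,y)). -/
import Mathlib


structure Atom (α β : Type) where
  req : Finset α
  prop : Finset β
deriving DecidableEq

def gen {α β : Type} [DecidableEq α] [DecidableEq β]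
    (Obs : Atom α β → Finset α) (A B : Atom α β) : Atom α β :=
  ⟨A.req ∪ B.req ∪ Obs A ∪ Obs B, A.prop ∩ B.prop⟩

/-- Temporal consistency of generated labelings: in a weak compass structure on {0,…,m}
with empty requests on the diagonal and L(x,y) = gen(L(x,y−1), L(x+1,y)) for x < y,
every proper sub-interval (x′,y′) ⊏ (x,y) satisfies Req(L(x′,y′)) ⊆ Req(L(x,y)) and
Obs(L(x′,y′)) ⊆ Req(L(x,y)). -/
theorem compass_temporal_consistency {α β : Type} [DecidableEq α] [DecidableEq β]
    (Obs : Atom α β → Finset α) (m : ℕ) (L : ℕ → ℕ → Atom α β)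
    (hdiag : ∀ x, x ≤ m → (L x x).req = ∅)
    (hgen : ∀ x y, x < y → y ≤ m → L x y = gen Obs (L x (y - 1)) (L (x + 1) y)) :
    ∀ x x' y' y, x ≤ x' → x' ≤ y' → y' ≤ y → y ≤ m → (x', y') ≠ (x, y) →
      (L x' y').req ⊆ (L x y).req ∧ Obs (L x' y') ⊆ (L x y).req := by
  have key : ∀ n x y, y - x = n → x ≤ y → y ≤ m → ∀ x' y', x ≤ x' → x' ≤ y' → y' ≤ y →
      (x', y') ≠ (x, y) → (L x' y').req ⊆ (L x y).req ∧ Obs (L x' y') ⊆ (L x y).req := by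
    intro n
    induction n using Nat.strong_induction_on with
    | _ n ih =>
      intro x y hn hxy hym x' y' h1 h2 h3 hne
      simp only [Ne, Prod.mk.injEq, not_and] at hne
      have hxlty : x < y := by
        rcases lt_or_eq_of_le hxy with h | h
        · exact h
        · exfalso; subst h
          have hx : x' = x := by omega
          exact hne hx (by omega)
      have hreq : (L x y).req =
          (L x (y-1)).req ∪ (L (x+1) y).req ∪ Obs (L x (y-1)) ∪ Obs (L (x+1) y) := by
        rw [hgen x y hxlty hym]; rfl
      have hs1 : (L x (y-1)).req ⊆ (L x y).req := by
        rw [hreq]; intro a ha; simp only [Finset.mem_union]; tauto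
      have hs2 : (L (x+1) y).req ⊆ (L x y).req := by
        rw [hreq]; intro a ha; simp only [Finset.mem_union]; tauto
      have hs3 : Obs (L x (y-1)) ⊆ (L x y).req := by
        rw [hreq]; intro a ha; simp only [Finset.mem_union]; tauto
      have hs4 : Obs (L (x+1) y) ⊆ (L x y).req := by
        rw [hreq]; intro a ha; simp only [Finset.mem_union]; tauto
      by_cases hx' : x < x'
      · -- contained in (x+1, y)
        by_cases heq : x' = x + 1 ∧ y' = y
        · obtain ⟨e1, e2⟩ := heq; subst e1; subst e2
          exact ⟨hs2, hs4⟩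
        · have hlt : y - (x + 1) < n := by omega
          have hne' : (x', y') ≠ (x + 1, y) := by
            simp only [Ne, Prod.mk.injEq]; tauto
          obtain ⟨ha, hb⟩ := ih (y - (x+1)) hlt (x+1) y rfl (by omega) hym x' y'
            (by omega) h2 h3 hne'
          exact ⟨ha.trans hs2, hb.trans hs2⟩
      · -- x' = x, so y' < y
        have hx'x : x' = x := le_antisymm (not_lt.mp hx') h1
        have hy' : y' < y := by
          rcases lt_or_eq_of_le h3 with h | h
          · exact h
          · exact absurd (hne hx'x) (by omega)
        by_cases heq : x' = x ∧ y' = y - 1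
        · obtain ⟨e1, e2⟩ := heq; subst e1; subst e2
          exact ⟨hs1, hs3⟩
        · have hlt : (y - 1) - x < n := by omega
          have hne' : (x', y') ≠ (x, y - 1) := by
            simp only [Ne, Prod.mk.injEq]; tauto
          obtain ⟨ha, hb⟩ := ih ((y-1) - x) hlt x (y-1) rfl (by omega) (by omega) x' y'
            h1 h2 (by omega) hne'
          exact ⟨ha.trans hs1, hb.trans hs1⟩
  intro x x' y' y h1 h2 h3 h4 h5
  exact key (y - x) x y rfl (by omega) h4 x' y' h1 h2 h3 h5
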